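/- arXiv:1010.6052 — 4 statements merged into one kernel-verified Lean document; each statement's English description precedes it below -/
import Mathlib

section
/- Let p be a real polynomial all of whose roots are real, and let λ be any real number. Then the polynomial p - λ·p' has all real roots, and its mesh is at least the mesh of p: M(p - λp') ≥ M(p). -/
open Polynomial
open scoped ENNReal

noncomputable section

/-- A real polynomial is hyperbolic (all its roots are real) iff the number of its
real roots counted with multiplicity equals its degree. -/
def Hyperbolic (p : Polynomial ℝ) : Prop := p.roots.card = p.natDegree

/-- The list of real roots of `p` (with multiplicity), sorted in increasing order. -/
def sortedRoots (p : Polynomial ℝ) : List ℝ := p.roots.sort (· ≤ ·)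

/-- The mesh of `p`: the minimal distance between consecutive real roots of `p`
(counted with multiplicity); it is `⊤` if `p` has fewer than two real roots. -/
def mesh (p : Polynomial ℝ) : ℝ≥0∞ :=
  ⨅ i ∈ Finset.range ((sortedRoots p).length - 1),
    ENNReal.ofReal ((sortedRoots p).getD (i + 1) 0 - (sortedRoots p).getD i 0)

/-- The list of absolute values of the real roots of `p` (with multiplicity),
sorted in increasing order. -/
def sortedAbsRoots (p : Polynomial ℝ) : List ℝ := (p.roots.map (fun x => |x|)).sort (· ≤ ·)

/-- The logarithmic mesh of `p`: the minimal quotient of consecutive absolute values of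
roots of `p`, the roots being ordered so that `|x₁| ≤ |x₂| ≤ ⋯ ≤ |x_k|`;
it is `⊤` if `p` has fewer than two real roots. -/
def lmesh (p : Polynomial ℝ) : ℝ≥0∞ :=
  ⨅ i ∈ Finset.range ((sortedAbsRoots p).length - 1),
    ENNReal.ofReal ((sortedAbsRoots p).getD (i + 1) 0 / (sortedAbsRoots p).getD i 0)

/-- The diagonal operator associated with the sequence `α`, acting on `ℝ[x]`
by `x^i ↦ α i • x^i`. -/
def diagOp (α : ℕ → ℝ) (p : Polynomial ℝ) : Polynomial ℝ :=
  ∑ i ∈ p.support, Polynomial.C (α i * p.coeff i) * Polynomial.X ^ i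

/-- The polynomial `∑_{j=0}^k C(k,j) * a j * x^j` (binomial normalization). -/
def binPoly (k : ℕ) (a : ℕ → ℝ) : Polynomial ℝ :=
  ∑ j ∈ Finset.range (k + 1), Polynomial.C ((k.choose j : ℝ) * a j) * Polynomial.X ^ j

/-- The Schur–Szegő product of two polynomials of degree `k`: if
`P = ∑ C(k,j) aⱼ xʲ` and `Q = ∑ C(k,j) bⱼ xʲ`, then `P * Q = ∑ C(k,j) aⱼ bⱼ xʲ`,
i.e. the `j`-th coefficient of `P*Q` is `C(k,j)⁻¹ * (coeff j of P) * (coeff j of Q)`. -/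
def schurSzego (k : ℕ) (P Q : Polynomial ℝ) : Polynomial ℝ :=
  ∑ j ∈ Finset.range (k + 1),
    Polynomial.C ((k.choose j : ℝ)⁻¹ * P.coeff j * Q.coeff j) * Polynomial.X ^ j

/-- One-sided (non-strict) interlacing: writing the sorted roots of `f` as
`x₁ ≤ ⋯ ≤ x_n` and those of `g` as `y₁ ≤ ⋯ ≤ y_m`, we have
`x₁ ≤ y₁ ≤ x₂ ≤ y₂ ≤ ⋯`. -/
def InterlaceAux (f g : Polynomial ℝ) : Prop :=
  (∀ i < (sortedRoots f).length, (sortedRoots f).getD i 0 ≤ (sortedRoots g).getD i 0) ∧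
  (∀ i, i + 1 < (sortedRoots f).length →
    (sortedRoots g).getD i 0 ≤ (sortedRoots f).getD (i + 1) 0)

/-- The roots of `f` and `g` (non-strictly) interlace. -/
def RootsInterlace (f g : Polynomial ℝ) : Prop := InterlaceAux f g ∨ InterlaceAux g f

/-!
Off the roots of a split polynomial `p`, `p - λ p' = p · (1 - λ ∑ᵢ 1 / (x - rᵢ))`, the sum running
over the roots `rᵢ` of `p`. At a non-real `z` every term `1 / (z - rᵢ)` has imaginary part of sign
opposite to `Im z`, so `p - λ p'` has no non-real roots.

For the mesh, suppose two consecutive roots `y ≤ y'` of `q = p - λ p'` are closer than every gap of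
`p`. Then `p` has simple roots, `y` and `y'` are not roots of `p`, and by Laguerre's identity
`p'² - p p'' = p² ∑ᵢ 1 / (x - rᵢ)²` the roots of `q` are simple, so `y < y'`. Hence
`∑ᵢ 1 / (y - rᵢ) = 1 / λ = ∑ᵢ 1 / (y' - rᵢ)`. If no `rᵢ` lies in `(y, y')`, each term of the
difference of the two sums is positive; otherwise, pairing `1 / (y - rᵢ)` with `1 / (y' - rᵢ₊₁)`
(which lie on the same side of the pole because `rᵢ₊₁ - rᵢ > y' - y`) makes it negative.
-/

theorem Complex.im_sum_one_div_sub_ofReal_ne_zero {s : Multiset ℝ} (hs : s ≠ 0) {z : ℂ}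
    (hz : z.im ≠ 0) : (s.map fun r : ℝ ↦ 1 / (z - r)).sum.im ≠ 0 := by
  have him : (s.map fun r : ℝ ↦ 1 / (z - r)).sum.im
      = (s.map fun r : ℝ ↦ (1 / (z - r)).im).sum := by
    simpa [Multiset.map_map] using map_multiset_sum imAddGroupHom (s.map fun r : ℝ ↦ 1 / (z - r))
  have hterm : ∀ r ∈ s, z.im * (1 / (z - r)).im < 0 := by
    intro r _
    have hzr : z - r ≠ 0 := fun h ↦ hz (by simpa using congrArg im h)
    rw [one_div, inv_im, sub_im, ofReal_im, sub_zero, mul_div_assoc']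
    exact div_neg_of_neg_of_pos (by nlinarith [pow_two_pos_of_ne_zero hz]) (normSq_pos.2 hzr)
  have hneg := Multiset.sum_lt_sum_of_nonempty (g := fun _ ↦ (0 : ℝ)) hs hterm
  rw [Multiset.map_const', Multiset.sum_replicate, smul_zero, Multiset.sum_map_mul_left] at hneg
  rw [him]
  intro h
  rw [h, mul_zero] at hneg
  exact lt_irrefl 0 hneg

namespace Polynomial

section Field

variable {K : Type*} [Field K]

theorem Splits.mul_sum_one_div_sub_roots_eq_one {f : K[X]} (hf : f.Splits) {c x : K}
    (hx : f.eval x ≠ 0) (h : (f - C c * derivative f).eval x = 0) :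
    c * (f.roots.map fun z ↦ 1 / (x - z)).sum = 1 := by
  rw [eval_sub, eval_mul, eval_C, hf.eval_derivative_eq_eval_mul_sum hx] at h
  apply mul_left_cancel₀ hx
  linear_combination -h

theorem sq_eval_derivative_sub_eval_mul_eval_derivative_derivative_multiset_prod
    (s : Multiset K) {x : K} (hx : ∀ a ∈ s, x ≠ a) :
    eval x (derivative (s.map (X - C ·)).prod) ^ 2
        - eval x (s.map (X - C ·)).prod * eval x (derivative (derivative (s.map (X - C ·)).prod))
      = eval x (s.map (X - C ·)).prod ^ 2 * (s.map fun a ↦ 1 / (x - a) ^ 2).sum := by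
  induction s using Multiset.induction_on with
  | empty => simp
  | cons a s ih =>
    have hxa : x - a ≠ 0 := sub_ne_zero.2 (hx a (Multiset.mem_cons_self a s))
    specialize ih fun b hb ↦ hx b (Multiset.mem_cons_of_mem hb)
    simp only [Multiset.map_cons, Multiset.prod_cons, Multiset.sum_cons, derivative_mul,
      derivative_X_sub_C, one_mul, derivative_add, eval_add, eval_mul, eval_sub, eval_X,
      eval_C] at ih ⊢
    have hinv : (x - a) ^ 2 * (1 / (x - a) ^ 2) = 1 := by field_simp
    linear_combination (x - a) ^ 2 * ih - eval x (s.map (X - C ·)).prod ^ 2 * hinv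

theorem Splits.sq_eval_derivative_sub_eval_mul_eval_derivative_derivative {f : K[X]}
    (hf : f.Splits) {x : K} (hx : f.eval x ≠ 0) :
    eval x (derivative f) ^ 2 - eval x f * eval x (derivative (derivative f))
      = eval x f ^ 2 * (f.roots.map fun a ↦ 1 / (x - a) ^ 2).sum := by
  have hroots : ∀ a ∈ f.roots, x ≠ a := by
    rintro a ha rfl
    exact hx (isRoot_of_mem_roots ha)
  have key := sq_eval_derivative_sub_eval_mul_eval_derivative_derivative_multiset_prod _ hroots
  have hfac := hf.eq_prod_roots
  set c := f.leadingCoeff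
  set s := f.roots
  rw [hfac]
  simp only [derivative_C_mul, eval_mul, eval_C]
  linear_combination c ^ 2 * key

theorem eval_ne_zero_of_mem_roots_sub_C_mul_derivative {p : K[X]}
    (hp : p.roots.Nodup) {c x : K} (hc : c ≠ 0) (hx : x ∈ (p - C c * derivative p).roots) :
    p.eval x ≠ 0 := by
  classical
  intro hpx
  obtain ⟨hq0, hqx⟩ := mem_roots'.1 hx
  have hp0 : p ≠ 0 := by rintro rfl; simp at hq0
  have hdx : (derivative p).IsRoot x := by simpa [hpx, hc] using hqx
  have hmult := (one_lt_rootMultiplicity_iff_isRoot hp0).2 ⟨hpx, hdx⟩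
  rw [← count_roots] at hmult
  exact hmult.not_ge (Multiset.nodup_iff_count_le_one.1 hp x)

end Field

theorem Splits.eval_mul_eval_derivative_derivative_lt_sq {f : ℝ[X]} (hf : f.Splits) {x : ℝ}
    (hx : f.eval x ≠ 0) (hroots : f.roots ≠ 0) :
    eval x f * eval x (derivative (derivative f)) < eval x (derivative f) ^ 2 := by
  have hsum : 0 < (f.roots.map fun a ↦ 1 / (x - a) ^ 2).sum := by
    simpa using Multiset.sum_lt_sum_of_nonempty (f := fun _ ↦ (0 : ℝ)) hroots fun a ha ↦ by
      have : x - a ≠ 0 := sub_ne_zero.2 fun h ↦ hx (h ▸ isRoot_of_mem_roots ha)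
      positivity
  have := hf.sq_eval_derivative_sub_eval_mul_eval_derivative_derivative hx
  linarith [mul_pos (pow_two_pos_of_ne_zero hx) hsum]

theorem Splits.sub_C_mul_derivative {p : ℝ[X]} (hp : p.Splits) (c : ℝ) :
    (p - C c * derivative p).Splits := by
  refine Splits.of_splits_map (algebraMap ℝ ℂ) (IsAlgClosed.splits _) fun z hz ↦ ?_
  by_contra hzr
  have him : z.im ≠ 0 := fun h ↦ hzr ⟨z.re, Complex.ext (by simp) (by simp [h])⟩
  obtain ⟨hq0, hqz⟩ := mem_roots'.1 hz
  have hp0 : p ≠ 0 := by rintro rfl; simp at hq0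
  have hpz : (p.map (algebraMap ℝ ℂ)).eval z ≠ 0 := fun h ↦ hzr (hp.mem_range_of_isRoot hp0 h)
  rw [Polynomial.map_sub, Polynomial.map_mul, map_C, ← derivative_map] at hqz
  have hS := (hp.map _).mul_sum_one_div_sub_roots_eq_one hpz hqz
  rw [hp.roots_map, Multiset.map_map] at hS
  have hc : c ≠ 0 := by rintro rfl; simp at hS
  have hroots : p.roots ≠ 0 := by rintro h; simp [h] at hS
  apply Complex.im_sum_one_div_sub_ofReal_ne_zero hroots him
  simpa [hc] using congrArg Complex.im hS

theorem Splits.nodup_roots_sub_C_mul_derivative {p : ℝ[X]} (hp : p.Splits) (hnd : p.roots.Nodup)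
    (c : ℝ) : (p - C c * derivative p).roots.Nodup := by
  rcases eq_or_ne c 0 with rfl | hc
  · simpa using hnd
  rw [Multiset.nodup_iff_count_le_one]
  intro x
  by_contra! hmult
  rw [count_roots] at hmult
  have hq0 : p - C c * derivative p ≠ 0 := by rintro h; simp [h] at hmult
  obtain ⟨hqx, hq'x⟩ := (one_lt_rootMultiplicity_iff_isRoot hq0).1 hmult
  have hpx := eval_ne_zero_of_mem_roots_sub_C_mul_derivative hnd hc ((mem_roots hq0).2 hqx)
  simp only [IsRoot, eval_sub, eval_mul, eval_C, derivative_sub, derivative_mul, derivative_C,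
    zero_mul, zero_add] at hqx hq'x
  have hroots : p.roots ≠ 0 := by
    intro h
    have hdeg : p.natDegree = 0 := by rw [hp.natDegree_eq_card_roots, h, Multiset.card_zero]
    rw [derivative_of_natDegree_zero hdeg, eval_zero, mul_zero, sub_zero] at hqx
    exact hpx hqx
  have hlaguerre := hp.eval_mul_eval_derivative_derivative_lt_sq hpx hroots
  have hsq : eval x p * eval x (derivative (derivative p)) = eval x (derivative p) ^ 2 := by
    linear_combination eval x (derivative (derivative p)) * hqx - eval x (derivative p) * hq'x
  exact hlaguerre.ne hsq

end Polynomial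

open Finset in
theorem sum_one_div_sub_ne_sum_one_div_sub {n : ℕ} {r : ℕ → ℝ} {y y' : ℝ} (hn : 0 < n)
    (hmono : ∀ i j, i ≤ j → j < n → r i ≤ r j)
    (hgap : ∀ i, i + 1 < n → r i + (y' - y) < r (i + 1)) (hyy' : y < y')
    (hy : ∀ i < n, r i ≠ y) (hy' : ∀ i < n, r i ≠ y') :
    ∑ i ∈ range n, 1 / (y - r i) ≠ ∑ i ∈ range n, 1 / (y' - r i) := by
  by_cases hbetween : ∃ t < n, y < r t ∧ r t < y'
  · obtain ⟨t, htn, hyt, hty'⟩ := hbetween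
    obtain ⟨m, rfl⟩ : ∃ m, n = m + 1 := ⟨n - 1, by omega⟩
    have hlast : 1 / (y - r m) < 0 :=
      one_div_neg.2 (by linarith [hmono t m (by omega) (by omega)])
    have hfirst : 0 < 1 / (y' - r 0) :=
      one_div_pos.2 (by linarith [hmono 0 t (by omega) htn])
    have hstep : ∀ i ∈ range m, 1 / (y - r i) < 1 / (y' - r (i + 1)) := by
      intro i hi
      have hi := mem_range.1 hi
      have hgi := hgap i (by omega)
      rcases lt_or_ge i t with hit | hti
      · have := hmono (i + 1) t (by omega) htn
        exact one_div_lt_one_div_of_lt (by linarith) (by linarith)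
      · have := hmono t i hti (by omega)
        exact one_div_lt_one_div_of_neg_of_lt (by linarith) (by linarith)
    rw [sum_range_succ, sum_range_succ']
    linarith [sum_le_sum fun i hi ↦ (hstep i hi).le]
  · push Not at hbetween
    refine (sum_lt_sum_of_nonempty (nonempty_range_iff.2 hn.ne') fun i hi ↦ ?_).ne'
    have hi := mem_range.1 hi
    rcases lt_or_gt_of_ne (hy i hi) with hiy | hyi
    · exact one_div_lt_one_div_of_lt (by linarith) (by linarith)
    · have := lt_of_le_of_ne (hbetween i hi hyi) (hy' i hi).symm
      exact one_div_lt_one_div_of_neg_of_lt (by linarith) (by linarith)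

theorem hyperbolic_iff_splits {p : ℝ[X]} : Hyperbolic p ↔ p.Splits :=
  splits_iff_card_roots.symm

section sortedRoots

variable {p : ℝ[X]} {i j : ℕ}

theorem coe_sortedRoots (p : ℝ[X]) : (sortedRoots p : Multiset ℝ) = p.roots :=
  Multiset.sort_eq _ _

theorem sum_map_roots_eq_sum_range_sortedRoots (p : ℝ[X]) (f : ℝ → ℝ) :
    (p.roots.map f).sum
      = ∑ i ∈ Finset.range (sortedRoots p).length, f ((sortedRoots p).getD i 0) := by
  rw [← coe_sortedRoots, Multiset.map_coe, Multiset.sum_coe, ← Fin.sum_univ_fun_getElem,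
    Finset.sum_range]
  simp

theorem getD_sortedRoots_mem_roots (hi : i < (sortedRoots p).length) :
    (sortedRoots p).getD i 0 ∈ p.roots := by
  rw [← coe_sortedRoots, List.getD_eq_getElem _ _ hi]
  exact Multiset.mem_coe.2 (List.getElem_mem hi)

theorem getD_sortedRoots_le (hij : i ≤ j) (hj : j < (sortedRoots p).length) :
    (sortedRoots p).getD i 0 ≤ (sortedRoots p).getD j 0 := by
  rcases hij.eq_or_lt with rfl | hij
  · rfl
  rw [List.getD_eq_getElem _ _ (hij.trans hj), List.getD_eq_getElem _ _ hj]
  exact List.pairwise_iff_getElem.1 (Multiset.pairwise_sort _ _) _ _ _ _ hij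

theorem nodup_roots_of_getD_sortedRoots_lt
    (h : ∀ i, i + 1 < (sortedRoots p).length →
      (sortedRoots p).getD i 0 < (sortedRoots p).getD (i + 1) 0) :
    p.roots.Nodup := by
  rw [← coe_sortedRoots, Multiset.coe_nodup]
  have hchain : (sortedRoots p).IsChain (· < ·) := List.isChain_iff_getElem.2 fun i hi ↦ by
    have := h i hi
    rwa [List.getD_eq_getElem _ _ hi, List.getD_eq_getElem _ _ (Nat.lt_of_succ_lt hi)] at this
  exact (List.isChain_iff_pairwise.1 hchain).imp ne_of_lt

theorem getD_sortedRoots_lt_of_nodup (hp : p.roots.Nodup) (hi : i + 1 < (sortedRoots p).length) :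
    (sortedRoots p).getD i 0 < (sortedRoots p).getD (i + 1) 0 := by
  refine (getD_sortedRoots_le i.le_succ hi).lt_of_ne fun h ↦ ?_
  rw [← coe_sortedRoots, Multiset.coe_nodup] at hp
  rw [List.getD_eq_getElem _ _ (Nat.lt_of_succ_lt hi), List.getD_eq_getElem _ _ hi,
    hp.getElem_inj_iff] at h
  omega

theorem mesh_le_ofReal_getD_sortedRoots_sub (hi : i + 1 < (sortedRoots p).length) :
    mesh p ≤ ENNReal.ofReal ((sortedRoots p).getD (i + 1) 0 - (sortedRoots p).getD i 0) :=
  iInf₂_le i (Finset.mem_range.2 (by omega))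

end sortedRoots

theorem mesh_le_mesh_sub_C_mul_derivative {p : ℝ[X]} (hp : p.Splits) {c : ℝ} (hc : c ≠ 0) :
    mesh p ≤ mesh (p - C c * derivative p) := by
  set q := p - C c * derivative p
  set r : ℕ → ℝ := fun j ↦ (sortedRoots p).getD j 0
  refine le_iInf₂ fun i hi ↦ ?_
  have hi : i + 1 < (sortedRoots q).length := by rw [Finset.mem_range] at hi; omega
  set y := (sortedRoots q).getD i 0
  set y' := (sortedRoots q).getD (i + 1) 0
  by_contra! hlt
  have hgap : ∀ j, j + 1 < (sortedRoots p).length → r j + (y' - y) < r (j + 1) := fun j hj ↦ by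
    have := (ENNReal.ofReal_lt_ofReal_iff'.1
      (hlt.trans_le (mesh_le_ofReal_getD_sortedRoots_sub hj))).1
    linarith
  have hyy' : y ≤ y' := getD_sortedRoots_le i.le_succ hi
  have hnd : p.roots.Nodup :=
    nodup_roots_of_getD_sortedRoots_lt fun j hj ↦ by linarith [hgap j hj]
  have hy := getD_sortedRoots_mem_roots (Nat.lt_of_succ_lt hi)
  have hy' := getD_sortedRoots_mem_roots hi
  have hpy := eval_ne_zero_of_mem_roots_sub_C_mul_derivative hnd hc hy
  have hpy' := eval_ne_zero_of_mem_roots_sub_C_mul_derivative hnd hc hy'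
  have hSy := hp.mul_sum_one_div_sub_roots_eq_one hpy (mem_roots'.1 hy).2
  have hSy' := hp.mul_sum_one_div_sub_roots_eq_one hpy' (mem_roots'.1 hy').2
  rw [sum_map_roots_eq_sum_range_sortedRoots] at hSy hSy'
  have hn : 0 < (sortedRoots p).length := by
    by_contra! h
    simp [Nat.le_zero.1 h] at hSy
  have hne : ∀ x, p.eval x ≠ 0 → ∀ j < (sortedRoots p).length, r j ≠ x := by
    rintro x hx j hj rfl
    exact hx (isRoot_of_mem_roots (getD_sortedRoots_mem_roots hj))
  exact sum_one_div_sub_ne_sum_one_div_sub hn (fun j k hjk hk ↦ getD_sortedRoots_le hjk hk) hgap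
    (getD_sortedRoots_lt_of_nodup (hp.nodup_roots_sub_C_mul_derivative hnd c) hi)
    (hne y hpy) (hne y' hpy') (mul_left_cancel₀ hc (hSy.trans hSy'.symm))

/-- For any hyperbolic polynomial `p` and any real `λ`, the polynomial `p - λ p'`
is hyperbolic and `M(p - λ p') ≥ M(p)`. -/
theorem stmt_0 (p : Polynomial ℝ) (hp : Hyperbolic p) (lam : ℝ) :
    Hyperbolic (p - Polynomial.C lam * Polynomial.derivative p) ∧
    mesh p ≤ mesh (p - Polynomial.C lam * Polynomial.derivative p) := by
  rw [hyperbolic_iff_splits] at hp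
  refine ⟨hyperbolic_iff_splits.2 (hp.sub_C_mul_derivative lam), ?_⟩
  rcases eq_or_ne lam 0 with rfl | hlam
  · simp
  · exact mesh_le_mesh_sub_C_mul_derivative hp hlam

end
end

section
/- (Hermite–Poulain) The finite-order linear differential operator T = a_0 + a_1 (d/dx) + ... + a_k (d/dx)^k with constant real coefficients maps every real polynomial with all real roots to a polynomial with all real roots if and only if its symbol polynomial Q(t) = a_0 + a_1 t + ... + a_k t^k has all real roots. -/
open Polynomial
open scoped ENNReal

noncomputable section

/-!
If `Q = c ∏ (t - rᵢ)` with real `rᵢ`, then `T = c ∏ (D - rᵢ)`, and each factor `D - r` preserves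
real-rootedness: Rolle's theorem for `e^{-rx} p(x)` puts a root of `p' - r p` strictly between
consecutive roots of `p`, a root of `p` of multiplicity `m` is a root of `p' - r p` of multiplicity
at least `m - 1`, and the one root still missing is real because a real polynomial cannot have
exactly one non-real root.

Conversely, `T(xⁿ) = ∑ aⱼ n(n-1)⋯(n-j+1) x^{n-j}` is real-rooted, hence so is its rescaled reversal
`∑ aⱼ (n(n-1)⋯(n-j+1) / nʲ) tʲ`, which tends to `Q` as `n → ∞`. Real-rootedness survives such
limits in bounded degree: at a non-real point `z`, each factor satisfies
`|w - r| ≤ (1 + |w - z| / |Im z|) |z - r|`, so a root of the limit at `z` would force it to vanish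
everywhere.
-/

namespace Hyperbolic

theorem zero : Hyperbolic 0 := by simp [Hyperbolic]

theorem X_pow (n : ℕ) : Hyperbolic (X ^ n : ℝ[X]) := by simp [Hyperbolic]

theorem C_mul {p : ℝ[X]} (hp : Hyperbolic p) (c : ℝ) : Hyperbolic (C c * p) := by
  rcases eq_or_ne c 0 with rfl | hc
  · simpa using zero
  · rwa [Hyperbolic, roots_C_mul p hc, natDegree_C_mul hc]

theorem aeval_eq {p : ℝ[X]} (hp : Hyperbolic p) (u : ℂ) :
    aeval u p = p.leadingCoeff * (p.roots.map fun r : ℝ => u - r).prod := by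
  conv_lhs => rw [← C_leadingCoeff_mul_prod_multiset_X_sub_C hp]
  simp [map_multiset_prod, Multiset.map_map]

end Hyperbolic

theorem hyperbolic_iff {p : ℝ[X]} :
    Hyperbolic p ↔ ∀ z : ℂ, z.im ≠ 0 → aeval z p = 0 → p = 0 := by
  refine ⟨fun hp z hz hpz => ?_, fun h => ?_⟩
  · rw [hp.aeval_eq, mul_eq_zero, Multiset.prod_eq_zero_iff] at hpz
    obtain hlc | hu := hpz
    · exact leadingCoeff_eq_zero.1 (Complex.ofReal_eq_zero.1 hlc)
    · obtain ⟨r, -, hr⟩ := Multiset.mem_map.1 hu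
      exact absurd (by simpa using congrArg Complex.im (sub_eq_zero.1 hr)) hz
  by_contra hp
  obtain ⟨q, hpq, hdeg, hq⟩ := exists_prod_multiset_X_sub_C_mul p
  have hq0 : 0 < (q.map (algebraMap ℝ ℂ)).degree := by
    rw [degree_map, ← natDegree_pos_iff_degree_pos]
    exact Nat.pos_of_ne_zero fun h0 => hp (by simpa [Hyperbolic, h0] using hdeg)
  obtain ⟨z, hz⟩ := Complex.exists_root hq0
  rw [IsRoot, eval_map_algebraMap] at hz
  have hzim : z.im ≠ 0 := fun him => by
    have hzr : z = algebraMap ℝ ℂ z.re := Complex.ext rfl (by simpa using him)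
    rw [hzr, aeval_algebraMap_apply_eq_algebraMap_eval, FaithfulSMul.algebraMap_eq_zero_iff] at hz
    have hq0 : q ≠ 0 := fun h0 => by simp [h0] at hq0
    exact Multiset.eq_zero_iff_forall_notMem.1 hq _ ((mem_roots hq0).2 hz)
  refine hp (h z hzim ?_ ▸ Hyperbolic.zero)
  rw [← hpq, map_mul, hz, mul_zero]

theorem hyperbolic_of_natDegree_le_card_roots_add_one {p : ℝ[X]}
    (h : p.natDegree ≤ Multiset.card p.roots + 1) : Hyperbolic p := by
  obtain ⟨q, -, hdeg, hq⟩ := exists_prod_multiset_X_sub_C_mul p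
  have hq1 : q.natDegree = 0 := by
    by_contra h0
    have hq0 : q ≠ 0 := fun h => by simp [h] at h0
    obtain ⟨x, hx⟩ := exists_root_of_degree_eq_one (p := q) (by
      rw [degree_eq_natDegree hq0]; norm_cast; omega)
    exact Multiset.eq_zero_iff_forall_notMem.1 hq _ ((mem_roots hq0).2 hx)
  simp [Hyperbolic, ← hdeg, hq1]

section Rolle

variable {p : ℝ[X]} {r : ℝ}

theorem hasDerivAt_exp_mul_eval (p : ℝ[X]) (r x : ℝ) :
    HasDerivAt (fun t => Real.exp (-r * t) * p.eval t)
      (Real.exp (-r * x) * (derivative p - C r * p).eval x) x := by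
  have hexp : HasDerivAt (fun t => Real.exp (-r * t)) (Real.exp (-r * x) * -r) x := by
    simpa using ((hasDerivAt_id x).const_mul (-r)).exp
  refine (hexp.mul (p.hasDerivAt x)).congr_deriv ?_
  simp only [eval_sub, eval_mul, eval_C]
  ring

theorem card_roots_toFinset_le_card_roots_derivative_sub_C_mul_sdiff_roots_succ
    (hq : derivative p - C r * p ≠ 0) :
    p.roots.toFinset.card ≤
      ((derivative p - C r * p).roots.toFinset \ p.roots.toFinset).card + 1 := by
  have hp : p ≠ 0 := fun h => hq (by simp [h])
  refine Finset.card_le_sdiff_of_interleaved fun x hx y hy hxy _ => ?_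
  rw [Multiset.mem_toFinset, mem_roots hp] at hx hy
  obtain ⟨z, hz, hz0⟩ := exists_hasDerivAt_eq_zero hxy
    ((continuous_const.mul continuous_id).rexp.mul p.continuous).continuousOn
    (by simp [hx.eq_zero, hy.eq_zero]) fun t _ => hasDerivAt_exp_mul_eval p r t
  refine ⟨z, ?_, hz⟩
  rw [Multiset.mem_toFinset, mem_roots hq, IsRoot]
  exact (mul_eq_zero.1 hz0).resolve_left (Real.exp_ne_zero _)

theorem rootMultiplicity_sub_one_le_rootMultiplicity_derivative_sub_C_mul
    (hq : derivative p - C r * p ≠ 0) (x : ℝ) :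
    p.rootMultiplicity x - 1 ≤ (derivative p - C r * p).rootMultiplicity x := by
  rw [le_rootMultiplicity_iff hq]
  refine dvd_sub ?_ (dvd_mul_of_dvd_right ?_ _)
  · exact (pow_dvd_pow _ (p.rootMultiplicity_sub_one_le_derivative_rootMultiplicity x)).trans
      (pow_rootMultiplicity_dvd _ x)
  · exact (pow_dvd_pow _ (Nat.sub_le _ 1)).trans (pow_rootMultiplicity_dvd p x)

theorem card_roots_le_card_roots_derivative_sub_C_mul_add_one
    (hq : derivative p - C r * p ≠ 0) :
    Multiset.card p.roots ≤ Multiset.card (derivative p - C r * p).roots + 1 := by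
  set q := derivative p - C r * p
  set s := p.roots.toFinset
  have hle : p.roots ≤ q.roots.filter (· ∈ s) + s.val := by
    refine Multiset.le_iff_count.2 fun x => ?_
    by_cases hx : x ∈ s
    · rw [Multiset.count_add, Multiset.count_filter_of_pos hx,
        Multiset.count_eq_one_of_mem s.nodup hx, count_roots, count_roots]
      have : p.rootMultiplicity x - 1 ≤ q.rootMultiplicity x :=
        rootMultiplicity_sub_one_le_rootMultiplicity_derivative_sub_C_mul hq x
      omega
    · simp [Multiset.count_eq_zero.2 fun h => hx (Multiset.mem_toFinset.2 h)]
  have hnew : (q.roots.toFinset \ s).card ≤ Multiset.card (q.roots.filter (· ∉ s)) := by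
    rw [Finset.sdiff_eq_filter, ← Multiset.toFinset_filter]
    exact Multiset.toFinset_card_le _
  have hcard := Multiset.card_le_card hle
  have hrolle : s.card ≤ (q.roots.toFinset \ s).card + 1 :=
    card_roots_toFinset_le_card_roots_derivative_sub_C_mul_sdiff_roots_succ hq
  rw [← Multiset.filter_add_not (· ∈ s) q.roots, Multiset.card_add]
  rw [Multiset.card_add] at hcard
  simp only [Finset.card_val] at hcard
  omega

theorem Hyperbolic.derivative_sub_C_mul (hp : Hyperbolic p) (r : ℝ) :
    Hyperbolic (derivative p - C r * p) := by
  by_cases hq : derivative p - C r * p = 0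
  · rw [hq]
    exact Hyperbolic.zero
  apply hyperbolic_of_natDegree_le_card_roots_add_one
  calc (derivative p - C r * p).natDegree ≤ p.natDegree :=
        (natDegree_sub_le _ _).trans <| max_le
          ((natDegree_derivative_le p).trans (Nat.sub_le _ _)) (natDegree_C_mul_le _ _)
    _ = Multiset.card p.roots := hp.symm
    _ ≤ _ := card_roots_le_card_roots_derivative_sub_C_mul_add_one hq

end Rolle

theorem sum_C_mul_iterate_derivative_eq_aeval {R : Type*} [CommSemiring R] (s : Finset ℕ)
    (a : ℕ → R) (p : R[X]) :
    ∑ j ∈ s, C (a j) * derivative^[j] p =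
      aeval (derivative : Module.End R R[X]) (∑ j ∈ s, C (a j) * X ^ j) p := by
  simp [map_sum, Module.End.pow_apply, smul_eq_C_mul]

theorem Hyperbolic.aeval_multiset_prod_X_sub_C_derivative (s : Multiset ℝ) {p : ℝ[X]}
    (hp : Hyperbolic p) :
    Hyperbolic (aeval (derivative : Module.End ℝ ℝ[X]) (s.map fun r => X - C r).prod p) := by
  induction s using Multiset.induction_on generalizing p with
  | empty => simpa using hp
  | cons r s ih =>
    rw [Multiset.map_cons, Multiset.prod_cons, mul_comm, map_mul, Module.End.mul_apply]
    convert ih (hp.derivative_sub_C_mul r) using 2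
    simp [smul_eq_C_mul]

theorem Hyperbolic.aeval_derivative {Q p : ℝ[X]} (hQ : Hyperbolic Q) (hp : Hyperbolic p) :
    Hyperbolic (aeval (derivative : Module.End ℝ ℝ[X]) Q p) := by
  rw [← C_leadingCoeff_mul_prod_multiset_X_sub_C hQ, map_mul, aeval_C, Module.End.mul_apply,
    Module.algebraMap_end_apply, smul_eq_C_mul]
  exact (hp.aeval_multiset_prod_X_sub_C_derivative _).C_mul _

theorem Hyperbolic.norm_aeval_le {P : ℝ[X]} (hP : Hyperbolic P) {K : ℕ} (hK : P.natDegree ≤ K)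
    {z : ℂ} (hz : z.im ≠ 0) (w : ℂ) :
    ‖aeval w P‖ ≤ (1 + ‖w - z‖ / |z.im|) ^ K * ‖aeval z P‖ := by
  set c := 1 + ‖w - z‖ / |z.im|
  have hc : 1 ≤ c := le_add_of_nonneg_right (by positivity)
  have hroot : ∀ r : ℝ, ‖w - r‖ ≤ c * ‖z - r‖ := fun r => by
    have him : |z.im| ≤ ‖z - r‖ := by simpa using Complex.abs_im_le_norm (z - r)
    calc ‖w - r‖ ≤ ‖w - z‖ + ‖z - r‖ := norm_sub_le_norm_sub_add_norm_sub _ _ _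
      _ ≤ ‖w - z‖ / |z.im| * ‖z - r‖ + ‖z - r‖ := by
        gcongr
        rw [div_mul_eq_mul_div, le_div_iff₀ (abs_pos.2 hz)]
        gcongr
      _ = c * ‖z - r‖ := by ring
  have hprod : (P.roots.map fun r : ℝ => ‖w - r‖).prod ≤
      c ^ K * (P.roots.map fun r : ℝ => ‖z - r‖).prod := calc
    _ ≤ (P.roots.map fun r : ℝ => c * ‖z - r‖).prod :=
      Multiset.prod_map_le_prod_map₀ _ _ (fun _ _ => norm_nonneg _) fun r _ => hroot r
    _ = c ^ Multiset.card P.roots * (P.roots.map fun r : ℝ => ‖z - r‖).prod := by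
      simp [Multiset.prod_map_mul]
    _ ≤ c ^ K * (P.roots.map fun r : ℝ => ‖z - r‖).prod := by
      gcongr
      · exact Multiset.prod_nonneg fun _ h => by
          obtain ⟨r, -, rfl⟩ := Multiset.mem_map.1 h
          exact norm_nonneg _
      exact hP ▸ hK
  have hnorm (u : ℂ) :
      ‖(P.roots.map fun r : ℝ => u - r).prod‖ = (P.roots.map fun r : ℝ => ‖u - r‖).prod := by
    simpa [Multiset.map_map] using map_multiset_prod (normHom : ℂ →*₀ ℝ) (P.roots.map (u - ·))
  rw [hP.aeval_eq, hP.aeval_eq, norm_mul, norm_mul, hnorm, hnorm, mul_left_comm]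
  gcongr

open Filter Topology

theorem hyperbolic_of_tendsto_aeval {ι : Type*} {l : Filter ι} [l.NeBot] {P : ι → ℝ[X]}
    {Q : ℝ[X]} {K : ℕ} (hP : ∀ᶠ i in l, Hyperbolic (P i)) (hK : ∀ᶠ i in l, (P i).natDegree ≤ K)
    (hlim : ∀ w : ℂ, Tendsto (fun i => aeval w (P i)) l (𝓝 (aeval w Q))) : Hyperbolic Q := by
  refine hyperbolic_iff.2 fun z hz hQz => ?_
  have hQ (w : ℂ) : aeval w Q = 0 := by
    have hle : ‖aeval w Q‖ ≤ (1 + ‖w - z‖ / |z.im|) ^ K * ‖aeval z Q‖ :=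
      le_of_tendsto_of_tendsto (hlim w).norm ((hlim z).norm.const_mul _) <| by
        filter_upwards [hP, hK] with i hi hiK using hi.norm_aeval_le hiK hz w
    simpa [hQz] using hle
  refine (Polynomial.map_eq_zero_iff (algebraMap ℝ ℂ).injective).1 (Polynomial.funext fun w => ?_)
  simp [eval_map_algebraMap, hQ]

theorem tendsto_descFactorial_div_pow (j : ℕ) :
    Tendsto (fun n : ℕ => (n.descFactorial j : ℝ) / n ^ j) atTop (𝓝 1) :=
  (Asymptotics.isEquivalent_iff_tendsto_one
    ((eventually_ne_atTop 0).mono fun _ hn => pow_ne_zero _ (Nat.cast_ne_zero.2 hn))).1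
    (isEquivalent_descFactorial j)

def approxSymbol (k : ℕ) (a : ℕ → ℝ) (n : ℕ) : ℝ[X] :=
  ∑ j ∈ Finset.range (k + 1), C (a j * (n.descFactorial j / n ^ j)) * X ^ j

section approxSymbol

variable {k : ℕ} {a : ℕ → ℝ}

theorem natDegree_approxSymbol_le (n : ℕ) : (approxSymbol k a n).natDegree ≤ k :=
  natDegree_sum_le_of_forall_le _ _ fun j hj =>
    (natDegree_C_mul_X_pow_le _ j).trans (Nat.lt_succ_iff.1 (Finset.mem_range.1 hj))

theorem tendsto_aeval_approxSymbol (w : ℂ) :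
    Tendsto (fun n => aeval w (approxSymbol k a n)) atTop
      (𝓝 (aeval w (∑ j ∈ Finset.range (k + 1), C (a j) * X ^ j))) := by
  simp only [approxSymbol, map_sum, map_mul, aeval_C, map_pow, aeval_X]
  refine tendsto_finsetSum _ fun j _ => Tendsto.mul_const _ ?_
  simpa [Function.comp_def] using (Complex.continuous_ofReal.tendsto _).comp
    ((tendsto_descFactorial_div_pow j).const_mul (a j))

theorem aeval_sum_iterate_derivative_X_pow {n : ℕ} (hkn : k ≤ n) (hn : n ≠ 0) {t : ℂ}
    (ht : t ≠ 0) :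
    aeval ((n : ℂ) / t) (∑ j ∈ Finset.range (k + 1), C (a j) * derivative^[j] (X ^ n)) =
      ((n : ℂ) / t) ^ n * aeval t (approxSymbol k a n) := by
  have hn' : (n : ℂ) ≠ 0 := Nat.cast_ne_zero.2 hn
  simp only [approxSymbol, iterate_derivative_X_pow_eq_C_mul, map_sum, map_mul, aeval_C, map_pow,
    aeval_X, Finset.mul_sum]
  refine Finset.sum_congr rfl fun j hj => ?_
  rw [pow_sub₀ _ (div_ne_zero hn' ht) (by grind), Complex.coe_algebraMap, div_pow, div_pow]
  push_cast
  field_simp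

theorem hyperbolic_approxSymbol
    (hT : ∀ p : ℝ[X], Hyperbolic p →
      Hyperbolic (∑ j ∈ Finset.range (k + 1), C (a j) * derivative^[j] p))
    {n : ℕ} (hkn : k ≤ n) (hn : n ≠ 0) : Hyperbolic (approxSymbol k a n) := by
  refine hyperbolic_iff.2 fun z hz hPz => ?_
  have hz0 : z ≠ 0 := fun h => hz (by simp [h])
  have hnz : ((n : ℂ) / z).im ≠ 0 := by simp [Complex.div_im, hz, hn, hz0]
  have hH := hyperbolic_iff.1 (hT _ (Hyperbolic.X_pow n)) _ hnz <| by
    rw [aeval_sum_iterate_derivative_X_pow hkn hn hz0, hPz, mul_zero]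
  have hP (t : ℂ) (ht : t ≠ 0) : aeval t (approxSymbol k a n) = 0 := by
    have h := aeval_sum_iterate_derivative_X_pow (a := a) hkn hn ht
    rw [hH, map_zero, eq_comm, mul_eq_zero] at h
    exact h.resolve_left (pow_ne_zero _ (div_ne_zero (Nat.cast_ne_zero.2 hn) ht))
  refine (Polynomial.map_eq_zero_iff (algebraMap ℝ ℂ).injective).1 (eq_zero_of_infinite_isRoot _ ?_)
  exact (Set.finite_singleton 0).infinite_compl.mono fun t ht => by
    simpa [eval_map_algebraMap] using hP t ht

end approxSymbol

/-- Hermite–Poulain theorem: the differential operator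
`T = a₀ + a₁ d/dx + ⋯ + a_k (d/dx)^k` with constant real coefficients maps every
hyperbolic polynomial to a hyperbolic polynomial if and only if its symbol polynomial
`Q(t) = a₀ + a₁ t + ⋯ + a_k t^k` is hyperbolic. -/
theorem stmt_2 (k : ℕ) (a : ℕ → ℝ) :
    (∀ p : Polynomial ℝ, Hyperbolic p →
      Hyperbolic (∑ j ∈ Finset.range (k + 1),
        Polynomial.C (a j) * (fun q : Polynomial ℝ => Polynomial.derivative q)^[j] p)) ↔
    Hyperbolic (∑ j ∈ Finset.range (k + 1), Polynomial.C (a j) * Polynomial.X ^ j) := by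
  refine ⟨fun hT => ?_, fun hQ p hp => ?_⟩
  · refine hyperbolic_of_tendsto_aeval ?_ (.of_forall natDegree_approxSymbol_le)
      tendsto_aeval_approxSymbol
    filter_upwards [eventually_gt_atTop k] with n hn
    exact hyperbolic_approxSymbol hT hn.le (by omega)
  · rw [sum_C_mul_iterate_derivative_eq_aeval]
    exact hQ.aeval_derivative hp

end
end

section
/- Let p be a real polynomial of degree k ≥ 2 all of whose roots are real and of the same sign (all nonzero roots either all positive or all negative), and let λ > 0. Then the polynomial T(p) = λp + x·p' has all real roots of the same sign and lmesh(λp + xp') ≥ lmesh(p). -/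
/-!
Since `λ p + x p' = x ^ (1 - λ) (x ^ λ p)'`, Rolle's theorem applied to `x ^ λ p` on `[0, s₁]`
and between consecutive distinct roots `s_{j-1} < s_j` of `p` gives a root of `λ p + x p'` in
each of these intervals, while a root of `p` of multiplicity `μ` is a root of `λ p + x p'` of
multiplicity `μ - 1`. This accounts for all `deg p` roots, so they are real and positive;
negative roots reduce to positive ones through `x ↦ -x`.

If `lmesh p > m > 1`, the roots `x₁ < ⋯ < x_k` of `p` are simple and, off them,
`(λ p + x p') / p = λ + ∑ⱼ x / (x - xⱼ)`. This sum vanishes at the root `y` of `λ p + x p'`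
in `(x_{i-1}, x_i)`. Comparing the term of `xⱼ` at `y` with the term of `x_{j+1}` at `m y`
shows that the sum is positive at `m y`, and since every term decreases between consecutive
poles, the next root of `λ p + x p'` is at least `m y`.
-/

open Polynomial
open scoped ENNReal

noncomputable section

def eulerOp (lam : ℝ) (p : ℝ[X]) : ℝ[X] := C lam * p + X * derivative p

lemma coeff_eulerOp (lam : ℝ) (p : ℝ[X]) (n : ℕ) :
    (eulerOp lam p).coeff n = (lam + n) * p.coeff n := by
  rcases n with _ | n
  · simp [eulerOp]
  · simp only [eulerOp, coeff_add, coeff_C_mul, coeff_X_mul, coeff_derivative]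
    push_cast
    ring

lemma natDegree_eulerOp_le (lam : ℝ) (p : ℝ[X]) : (eulerOp lam p).natDegree ≤ p.natDegree :=
  natDegree_le_iff_coeff_eq_zero.2 fun n hn => by
    rw [coeff_eulerOp, coeff_eq_zero_of_natDegree_lt hn, mul_zero]

lemma eulerOp_ne_zero {lam : ℝ} (hlam : 0 < lam) {p : ℝ[X]} (hp : p ≠ 0) :
    eulerOp lam p ≠ 0 := by
  intro h
  have := congrArg (coeff · p.natDegree) h
  simp only [coeff_eulerOp, coeff_zero, mul_eq_zero, coeff_natDegree, leadingCoeff_eq_zero] at this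
  rcases this with h' | h'
  · exact absurd h' (by positivity)
  · exact hp h'

lemma eulerOp_comp_neg_X (lam : ℝ) (p : ℝ[X]) :
    eulerOp lam (p.comp (-X)) = (eulerOp lam p).comp (-X) := by
  simp only [eulerOp, derivative_comp, derivative_neg, derivative_X, add_comp, mul_comp, C_comp,
    X_comp]
  ring

lemma rootMultiplicity_add_of_lt {R : Type*} [CommRing R] {p q : R[X]} {a : R} (hq : q ≠ 0)
    (h : q.rootMultiplicity a < p.rootMultiplicity a) :
    (p + q).rootMultiplicity a = q.rootMultiplicity a := by
  have hp : (X - C a) ^ (q.rootMultiplicity a + 1) ∣ p :=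
    (pow_dvd_pow _ h).trans (pow_rootMultiplicity_dvd p a)
  have hpq : ¬ (X - C a) ^ (q.rootMultiplicity a + 1) ∣ p + q := fun hdvd =>
    pow_rootMultiplicity_not_dvd hq a (by simpa using dvd_sub hdvd hp)
  have hpq0 : p + q ≠ 0 := fun h0 => hpq (h0 ▸ dvd_zero _)
  refine le_antisymm ((rootMultiplicity_le_iff hpq0 _ _).2 hpq) ?_
  simpa [min_eq_right h.le] using rootMultiplicity_add a hpq0

lemma rootMultiplicity_eulerOp {lam : ℝ} (hlam : lam ≠ 0) {p : ℝ[X]} (hp : p ≠ 0) {r : ℝ}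
    (hr0 : r ≠ 0) (hr : p.IsRoot r) :
    (eulerOp lam p).rootMultiplicity r = p.rootMultiplicity r - 1 := by
  have hμ : 0 < p.rootMultiplicity r := (rootMultiplicity_pos hp).2 hr
  have hp' : derivative p ≠ 0 := by
    rw [Ne, derivative_eq_zero, ← Ne, ← Nat.pos_iff_ne_zero, natDegree_pos_iff_degree_pos]
    exact degree_pos_of_root hp hr
  have hXp' : (X * derivative p).rootMultiplicity r = p.rootMultiplicity r - 1 := by
    rw [rootMultiplicity_mul (mul_ne_zero X_ne_zero hp'), derivative_rootMultiplicity_of_root hr,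
      rootMultiplicity_eq_zero (by simpa using hr0), zero_add]
  have hCp : (C lam * p).rootMultiplicity r = p.rootMultiplicity r := by
    rw [rootMultiplicity_mul (mul_ne_zero (C_ne_zero.2 hlam) hp), rootMultiplicity_C, zero_add]
  rw [eulerOp, rootMultiplicity_add_of_lt (mul_ne_zero X_ne_zero hp') (by omega), hXp']

/-- `eulerOp λ p = x ^ (1 - λ) * (x ^ λ * p)'`, so Rolle's theorem applies to `x ^ λ * p`,
which also vanishes at `0`. -/
lemma exists_isRoot_eulerOp_mem_Ioo {lam : ℝ} (hlam : 0 < lam) {p : ℝ[X]} {a b : ℝ}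
    (ha0 : 0 ≤ a) (hab : a < b) (ha : a = 0 ∨ p.IsRoot a) (hb : p.IsRoot b) :
    ∃ c ∈ Set.Ioo a b, (eulerOp lam p).IsRoot c := by
  set F : ℝ → ℝ := fun x => x ^ lam * p.eval x
  have hcont : ContinuousOn F (Set.Icc a b) :=
    ((Real.continuous_rpow_const hlam.le).mul p.continuous).continuousOn
  have hFab : F a = F b := by
    rcases ha with rfl | ha
    · simp [F, Real.zero_rpow hlam.ne', hb.eq_zero]
    · simp [F, ha.eq_zero, hb.eq_zero]
  have hderiv : ∀ x ∈ Set.Ioo a b,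
      HasDerivAt F (x ^ (lam - 1) * (eulerOp lam p).eval x) x := by
    intro x hx
    have hx0 : 0 < x := ha0.trans_lt hx.1
    refine ((Real.hasDerivAt_rpow_const (Or.inl hx0.ne')).mul (p.hasDerivAt x)).congr_deriv ?_
    rw [show x ^ lam = x ^ (lam - 1) * x by
      rw [← Real.rpow_add_one hx0.ne', sub_add_cancel]]
    simp only [eulerOp, eval_add, eval_mul, eval_C, eval_X]
    ring
  obtain ⟨c, hc, hc0⟩ := exists_hasDerivAt_eq_zero hab hcont hFab hderiv
  refine ⟨c, hc, ?_⟩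
  have hpow : c ^ (lam - 1) ≠ 0 := (Real.rpow_pos_of_pos (ha0.trans_lt hc.1) _).ne'
  exact (mul_eq_zero.1 hc0).resolve_left hpow

structure RolleSelection (lam : ℝ) (p : ℝ[X]) (c : ℝ → ℝ) : Prop where
  isRoot : ∀ s ∈ p.roots, (eulerOp lam p).IsRoot (c s)
  pos : ∀ s ∈ p.roots, 0 < c s
  lt : ∀ s ∈ p.roots, c s < s
  lt_of_lt : ∀ s ∈ p.roots, ∀ r ∈ p.roots, r < s → r < c s

lemma exists_rolleSelection {lam : ℝ} (hlam : 0 < lam) {p : ℝ[X]}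
    (hpos : ∀ x ∈ p.roots, 0 < x) : ∃ c, RolleSelection lam p c := by
  classical
  have key : ∀ s ∈ p.roots, ∃ c, (eulerOp lam p).IsRoot c ∧ 0 < c ∧ c < s ∧
      ∀ r ∈ p.roots, r < s → r < c := by
    intro s hs
    set A := insert 0 (p.roots.toFinset.filter (· < s))
    set a := A.max' (Finset.insert_nonempty _ _)
    have ha0 : 0 ≤ a := A.le_max' 0 (Finset.mem_insert_self _ _)
    have has : a < s := (A.max'_lt_iff _).2 fun y hy => by
      rcases Finset.mem_insert.1 hy with rfl | hy
      · exact hpos s hs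
      · exact (Finset.mem_filter.1 hy).2
    have hroot : a = 0 ∨ p.IsRoot a := by
      rcases Finset.mem_insert.1 (A.max'_mem _) with h | h
      · exact Or.inl h
      · exact Or.inr (isRoot_of_mem_roots (Multiset.mem_toFinset.1 (Finset.mem_filter.1 h).1))
    obtain ⟨c, hc, hcroot⟩ :=
      exists_isRoot_eulerOp_mem_Ioo hlam ha0 has hroot (isRoot_of_mem_roots hs)
    refine ⟨c, hcroot, ha0.trans_lt hc.1, hc.2, fun r hr hrs => ?_⟩
    exact (A.le_max' r (by simp [A, hr, hrs])).trans_lt hc.1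
  choose! c hc using key
  exact ⟨c, fun s hs => (hc s hs).1, fun s hs => (hc s hs).2.1, fun s hs => (hc s hs).2.2.1,
    fun s hs => (hc s hs).2.2.2⟩

lemma Multiset.card_sub_dedup_add_map_dedup {α : Type*} [DecidableEq α] (s : Multiset α)
    (f : α → α) : Multiset.card (s - s.dedup + s.dedup.map f) = Multiset.card s := by
  rw [Multiset.card_add, Multiset.card_map, ← Multiset.card_add,
    Multiset.sub_add_cancel (Multiset.dedup_le _)]

namespace RolleSelection

variable {lam : ℝ} {p : ℝ[X]} {c : ℝ → ℝ}

lemma pos_of_mem_roots (hc : RolleSelection lam p c) {s : ℝ} (hs : s ∈ p.roots) : 0 < s :=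
  (hc.pos s hs).trans (hc.lt s hs)

lemma notMem_roots (hc : RolleSelection lam p c) {s : ℝ} (hs : s ∈ p.roots) :
    c s ∉ p.roots := fun h => by
  rcases lt_or_ge (c s) s with h' | h'
  · exact lt_irrefl _ (hc.lt_of_lt s hs _ h h')
  · exact h'.not_gt (hc.lt s hs)

lemma strictMonoOn (hc : RolleSelection lam p c) : StrictMonoOn c {s | s ∈ p.roots} :=
  fun s hs t ht hst => (hc.lt s hs).trans (hc.lt_of_lt t ht s hs hst)

lemma roots_eulerOp (hc : RolleSelection lam p c) (hlam : 0 < lam) (hp : Hyperbolic p) :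
    (eulerOp lam p).roots = (p.roots - p.roots.dedup) + p.roots.dedup.map c := by
  classical
  rcases eq_or_ne p 0 with rfl | hp0
  · simp [eulerOp]
  have hT0 := eulerOp_ne_zero hlam hp0
  have hA : p.roots - p.roots.dedup ≤ (eulerOp lam p).roots := by
    refine Multiset.le_iff_count.2 fun x => ?_
    by_cases hx : x ∈ p.roots
    · rw [Multiset.count_sub, Multiset.count_dedup, if_pos hx, count_roots, count_roots,
        rootMultiplicity_eulerOp hlam.ne' hp0 (hc.pos_of_mem_roots hx).ne'
          (isRoot_of_mem_roots hx)]
    · rw [Multiset.count_eq_zero.2 fun h => hx (Multiset.mem_of_le (Multiset.sub_le_self _ _) h)]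
      exact Nat.zero_le _
  have hB : p.roots.dedup.map c ≤ (eulerOp lam p).roots := by
    refine (Multiset.le_iff_subset ((Multiset.nodup_dedup _).map_on fun s hs t ht hst => ?_)).2 ?_
    · exact hc.strictMonoOn.injOn (Multiset.mem_dedup.1 hs) (Multiset.mem_dedup.1 ht) hst
    · rintro _ h
      obtain ⟨s, hs, rfl⟩ := Multiset.mem_map.1 h
      exact (mem_roots hT0).2 (hc.isRoot s (Multiset.mem_dedup.1 hs))
  have hdisj : Disjoint (p.roots - p.roots.dedup) (p.roots.dedup.map c) := by
    refine Multiset.disjoint_left.2 fun hx hx' => ?_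
    obtain ⟨s, hs, rfl⟩ := Multiset.mem_map.1 hx'
    exact hc.notMem_roots (Multiset.mem_dedup.1 hs)
      (Multiset.mem_of_le (Multiset.sub_le_self _ _) hx)
  refine (Multiset.eq_of_le_of_card_le ?_ ?_).symm
  · rw [Multiset.add_eq_union_iff_disjoint.2 hdisj]
    exact Multiset.union_le hA hB
  · rw [Multiset.card_sub_dedup_add_map_dedup, hp]
    exact (card_roots' _).trans (natDegree_eulerOp_le lam p)

end RolleSelection

theorem hyperbolic_eulerOp {lam : ℝ} (hlam : 0 < lam) {p : ℝ[X]} (hp : Hyperbolic p)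
    (hpos : ∀ x ∈ p.roots, 0 < x) : Hyperbolic (eulerOp lam p) := by
  obtain ⟨c, hc⟩ := exists_rolleSelection hlam hpos
  refine le_antisymm (card_roots' _) ?_
  rw [hc.roots_eulerOp hlam hp, Multiset.card_sub_dedup_add_map_dedup, hp]
  exact natDegree_eulerOp_le lam p

theorem pos_of_mem_roots_eulerOp {lam : ℝ} (hlam : 0 < lam) {p : ℝ[X]} (hp : Hyperbolic p)
    (hpos : ∀ x ∈ p.roots, 0 < x) : ∀ x ∈ (eulerOp lam p).roots, 0 < x := by
  obtain ⟨c, hc⟩ := exists_rolleSelection hlam hpos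
  intro x hx
  rcases Multiset.mem_add.1 (hc.roots_eulerOp hlam hp ▸ hx) with hx | hx
  · exact hpos x (Multiset.mem_of_le (Multiset.sub_le_self _ _) hx)
  · obtain ⟨s, hs, rfl⟩ := Multiset.mem_map.1 hx
    exact hc.pos s (Multiset.mem_dedup.1 hs)

lemma sortedAbsRoots_eq_sortedRoots {p : ℝ[X]} (hpos : ∀ x ∈ p.roots, 0 < x) :
    sortedAbsRoots p = sortedRoots p := by
  rw [sortedAbsRoots, sortedRoots, Multiset.map_congr rfl fun x hx => abs_of_pos (hpos x hx),
    Multiset.map_id']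

lemma ofReal_le_lmesh_iff {p : ℝ[X]} (hpos : ∀ x ∈ p.roots, 0 < x) {m : ℝ} :
    ENNReal.ofReal m ≤ lmesh p ↔ ∀ i (hi : i + 1 < (sortedRoots p).length),
      m * (sortedRoots p)[i] ≤ (sortedRoots p)[i + 1] := by
  simp only [lmesh, sortedAbsRoots_eq_sortedRoots hpos, le_iInf_iff, Finset.mem_range]
  have hterm : ∀ i (hi : i + 1 < (sortedRoots p).length), ENNReal.ofReal m ≤
      ENNReal.ofReal ((sortedRoots p).getD (i + 1) 0 / (sortedRoots p).getD i 0) ↔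
        m * (sortedRoots p)[i] ≤ (sortedRoots p)[i + 1] := by
    intro i hi
    have hR : ∀ j (hj : j < (sortedRoots p).length), 0 < (sortedRoots p)[j] := fun j hj =>
      hpos _ ((Multiset.mem_sort _).1 (List.getElem_mem hj))
    rw [List.getD_eq_getElem _ _ hi, List.getD_eq_getElem _ _ (by omega),
      ENNReal.ofReal_le_ofReal_iff (div_nonneg (hR _ _).le (hR _ _).le), le_div_iff₀ (hR _ _)]
  exact forall_congr' fun i =>
    ⟨fun h hi => (hterm i hi).1 (h (by omega)), fun h hi => (hterm i (by omega)).2 (h _)⟩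

lemma one_le_lmesh {p : ℝ[X]} (hpos : ∀ x ∈ p.roots, 0 < x) : 1 ≤ lmesh p := by
  rw [← ENNReal.ofReal_one, ofReal_le_lmesh_iff hpos]
  intro i hi
  rw [one_mul]
  exact (Multiset.pairwise_sort _ _).sortedLE.getElem_le_getElem_of_le (Nat.le_succ i)

lemma lmesh_comp_neg_X (p : ℝ[X]) : lmesh (p.comp (-X)) = lmesh p := by
  simp only [lmesh, sortedAbsRoots, roots_comp_neg_X, Multiset.map_map, Function.comp_def, abs_neg]

lemma Hyperbolic.comp_neg_X {p : ℝ[X]} (hp : Hyperbolic p) : Hyperbolic (p.comp (-X)) := by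
  rw [Hyperbolic, roots_comp_neg_X, Multiset.card_map, natDegree_comp]
  simpa [Hyperbolic] using hp

lemma div_sub_le_div_sub_of_le_right {x a b : ℝ} (hx : 0 < x) (hab : a ≤ b)
    (hside : b < x ∨ x < a) : x / (x - a) ≤ x / (x - b) := by
  rcases hside with h | h
  · exact div_le_div_of_nonneg_left hx.le (by linarith) (by linarith)
  · rw [← neg_sub a x, ← neg_sub b x, div_neg, div_neg, neg_le_neg_iff]
    exact div_le_div_of_nonneg_left hx.le (by linarith) (by linarith)

lemma div_sub_le_div_sub_of_le_left {r u v : ℝ} (hr : 0 < r) (huv : u ≤ v)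
    (hside : r < u ∨ v < r) : v / (v - r) ≤ u / (u - r) := by
  have hu : u - r ≠ 0 := by rcases hside with h | h <;> linarith
  have hv : v - r ≠ 0 := by rcases hside with h | h <;> linarith
  have e : ∀ y, y - r ≠ 0 → y / (y - r) = 1 - r / (r - y) := fun y hy => by
    have hy' : r - y ≠ 0 := by rwa [← neg_sub, neg_ne_zero] at hy
    field_simp
    ring
  rw [e u hu, e v hv]
  linarith [div_sub_le_div_sub_of_le_right hr huv hside.symm]

/-- The term of `r t` at `x` is at most the term of `r (t + 1)` at `m * x`; the two unpaired
terms, of `r 0` at `m * x` and of the last pole at `x`, make the inequality strict. -/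
lemma sum_div_sub_lt_sum_mul_div_sub {N : ℕ} {r : Fin N → ℝ} (hmono : Monotone r) {m x : ℝ}
    (hr : ∀ s t : Fin N, (s : ℕ) + 1 = t → m * r s ≤ r t) (hx : 0 < x) {i : Fin N}
    (hxi : x < r i) (hix : r i < m * x) :
    ∑ j, x / (x - r j) < ∑ j, m * x / (m * x - r j) := by
  obtain ⟨n, rfl⟩ : ∃ n, N = n + 1 := ⟨N - 1, by have := i.pos; omega⟩
  have hm : 0 < m := pos_of_mul_pos_left (hx.trans (hxi.trans hix)) hx.le
  have hpair : ∀ t : Fin n, x / (x - r t.castSucc) ≤ m * x / (m * x - r t.succ) := by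
    intro t
    rw [← mul_div_mul_left x _ hm.ne', mul_sub]
    refine div_sub_le_div_sub_of_le_right (by positivity) (hr _ _ (by simp)) ?_
    rcases le_or_gt t.succ i with h | h
    · exact Or.inl ((hmono h).trans_lt hix)
    · exact Or.inr (by nlinarith [hmono (Fin.le_castSucc_iff.2 h)])
  have hfirst : 0 < m * x / (m * x - r 0) :=
    div_pos (by positivity) (by linarith [hmono (Fin.zero_le i)])
  have hlast : x / (x - r (Fin.last n)) < 0 :=
    div_neg_of_pos_of_neg hx (by linarith [hmono (Fin.le_last i)])
  calc ∑ j, x / (x - r j) = ∑ t : Fin n, x / (x - r t.castSucc) + x / (x - r (Fin.last n)) :=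
        Fin.sum_univ_castSucc _
    _ < ∑ t : Fin n, m * x / (m * x - r t.succ) + m * x / (m * x - r 0) :=
        add_lt_add_of_le_of_lt (Finset.sum_le_sum fun t _ => hpair t) (hlast.trans hfirst)
    _ = ∑ j, m * x / (m * x - r j) := by rw [Fin.sum_univ_succ, add_comm]

lemma eval_eulerOp_of_splits {lam : ℝ} {p : ℝ[X]} (hp : p.Splits) {x : ℝ}
    (hx : ¬ p.IsRoot x) :
    (eulerOp lam p).eval x = p.eval x * (lam + (p.roots.map fun z => x / (x - z)).sum) := by
  simp only [eulerOp, eval_add, eval_mul, eval_C, eval_X, hp.eval_derivative_eq_eval_mul_sum hx,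
    mul_add, ← Multiset.sum_map_mul_left, mul_one_div, mul_div_left_comm x]
  ring

lemma sum_map_roots_eq_sum_sortedRoots (p : ℝ[X]) (f : ℝ → ℝ) :
    (p.roots.map f).sum = ∑ j : Fin (sortedRoots p).length, f (sortedRoots p)[(j : ℕ)] := by
  rw [Fin.sum_univ_fun_getElem, sortedRoots, ← Multiset.sum_coe, ← Multiset.map_coe,
    Multiset.sort_eq]

lemma RolleSelection.mul_le_succ {lam : ℝ} {p : ℝ[X]} {c : ℝ → ℝ}
    (hc : RolleSelection lam p c) (hp : p.Splits) {m : ℝ} (hm : 1 < m)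
    (hR : ∀ i (hi : i + 1 < (sortedRoots p).length),
      m * (sortedRoots p)[i] ≤ (sortedRoots p)[i + 1])
    (i : ℕ) (hi : i + 1 < (sortedRoots p).length) :
    m * c (sortedRoots p)[i] ≤ c (sortedRoots p)[i + 1] := by
  set R := sortedRoots p
  have hmem : ∀ j (hj : j < R.length), R[j] ∈ p.roots := fun j hj =>
    (Multiset.mem_sort _).1 (List.getElem_mem hj)
  have hRi := hmem i (by omega)
  have hRi1 := hmem (i + 1) hi
  have hzero : ∀ s ∈ p.roots, lam + (p.roots.map fun z => c s / (c s - z)).sum = 0 := by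
    intro s hs
    have hcs : ¬ p.IsRoot (c s) := fun h =>
      hc.notMem_roots hs ((mem_roots (ne_zero_of_mem_roots hs)).2 h)
    have := hc.isRoot s hs
    rw [IsRoot, eval_eulerOp_of_splits hp hcs] at this
    exact (mul_eq_zero.1 this).resolve_left hcs
  by_contra! hlt
  have hRR : R[i] < R[i + 1] := by nlinarith [hR i hi, hc.pos_of_mem_roots hRi]
  have hsum_lt := sum_div_sub_lt_sum_mul_div_sub (r := fun j : Fin R.length => R[(j : ℕ)])
    (Multiset.pairwise_sort _ _).sortedLE.monotone_get
    (by rintro ⟨s, hs⟩ ⟨t, ht⟩ (rfl : s + 1 = t); exact hR s ht) (hc.pos _ hRi)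
    (i := ⟨i, by omega⟩) (hc.lt _ hRi) ((hc.lt_of_lt _ hRi1 _ hRi hRR).trans hlt)
  have hsum_le : (p.roots.map fun z => m * c R[i] / (m * c R[i] - z)).sum ≤
      (p.roots.map fun z => c R[i + 1] / (c R[i + 1] - z)).sum := by
    refine Multiset.sum_map_le_sum_map _ _ fun z hz =>
      div_sub_le_div_sub_of_le_left (hc.pos_of_mem_roots hz) hlt.le ?_
    rcases lt_or_ge z R[i + 1] with h | h
    · exact Or.inl (hc.lt_of_lt _ hRi1 z hz h)
    · exact Or.inr (by nlinarith [hR i hi, hc.lt _ hRi])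
  rw [sum_map_roots_eq_sum_sortedRoots, sum_map_roots_eq_sum_sortedRoots] at hsum_le
  have h1 := hzero _ hRi
  have h2 := hzero _ hRi1
  rw [sum_map_roots_eq_sum_sortedRoots] at h1 h2
  linarith

lemma ofReal_le_lmesh_eulerOp_of_one_lt {lam : ℝ} (hlam : 0 < lam) {p : ℝ[X]}
    (hp : Hyperbolic p) (hpos : ∀ x ∈ p.roots, 0 < x) {m : ℝ} (hm1 : 1 < m)
    (hm : ENNReal.ofReal m ≤ lmesh p) : ENNReal.ofReal m ≤ lmesh (eulerOp lam p) := by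
  obtain ⟨c, hc⟩ := exists_rolleSelection hlam hpos
  set R := sortedRoots p
  have hR := (ofReal_le_lmesh_iff hpos).1 hm
  have hRlt : R.SortedLT := List.IsChain.sortedLT <| List.isChain_iff_getElem.2 fun i hi => by
    have := hpos _ ((Multiset.mem_sort _).1 (List.getElem_mem (Nat.lt_of_succ_lt hi)))
    nlinarith [hR i hi]
  have hnodup : p.roots.Nodup := by
    rw [← Multiset.sort_eq p.roots (· ≤ ·)]
    exact Multiset.coe_nodup.2 hRlt.nodup
  have hsorted : sortedRoots (eulerOp lam p) = R.map c := by
    rw [sortedRoots, hc.roots_eulerOp hlam hp, hnodup.dedup, tsub_self, zero_add]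
    exact (Multiset.map_sort c p.roots (· ≤ ·) (· ≤ ·) fun a ha b hb =>
      (hc.strictMonoOn.le_iff_le ha hb).symm).symm
  refine (ofReal_le_lmesh_iff (pos_of_mem_roots_eulerOp hlam hp hpos)).2 fun i hi => ?_
  simp only [hsorted, List.getElem_map]
  exact hc.mul_le_succ (splits_iff_card_roots.2 hp) hm1 hR i (by simpa [hsorted] using hi)

theorem lmesh_le_lmesh_eulerOp {lam : ℝ} (hlam : 0 < lam) {p : ℝ[X]} (hp : Hyperbolic p)
    (hpos : ∀ x ∈ p.roots, 0 < x) : lmesh p ≤ lmesh (eulerOp lam p) := by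
  refine le_of_forall_lt fun a ha => ?_
  obtain ⟨m, -, ham, hm⟩ := ENNReal.lt_iff_exists_real_btwn.1 ha
  refine ham.trans_le ?_
  rcases le_or_gt m 1 with hm1 | hm1
  · exact (ENNReal.ofReal_le_one.2 hm1).trans
      (one_le_lmesh (pos_of_mem_roots_eulerOp hlam hp hpos))
  · exact ofReal_le_lmesh_eulerOp_of_one_lt hlam hp hpos hm1 hm.le

theorem stmt_5_general (p : Polynomial ℝ)
    (hhyp : Hyperbolic p)
    (hsign : (∀ x ∈ p.roots, 0 < x) ∨ (∀ x ∈ p.roots, x < 0))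
    (lam : ℝ) (hlam : 0 < lam) :
    (Hyperbolic (Polynomial.C lam * p + Polynomial.X * Polynomial.derivative p) ∧
      ((∀ x ∈ (Polynomial.C lam * p + Polynomial.X * Polynomial.derivative p).roots, 0 < x) ∨
       (∀ x ∈ (Polynomial.C lam * p + Polynomial.X * Polynomial.derivative p).roots, x < 0))) ∧
    lmesh p ≤ lmesh (Polynomial.C lam * p + Polynomial.X * Polynomial.derivative p) := by
  rw [← eulerOp]
  rcases hsign with hpos | hneg
  · exact ⟨⟨hyperbolic_eulerOp hlam hhyp hpos,
      .inl (pos_of_mem_roots_eulerOp hlam hhyp hpos)⟩, lmesh_le_lmesh_eulerOp hlam hhyp hpos⟩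
  · set q := p.comp (-X)
    have hq : Hyperbolic q := hhyp.comp_neg_X
    have hqpos : ∀ x ∈ q.roots, 0 < x := by
      simpa only [q, roots_comp_neg_X, Multiset.forall_mem_map_iff, neg_pos] using hneg
    have hTp : eulerOp lam p = (eulerOp lam q).comp (-X) := by
      rw [eulerOp_comp_neg_X, comp_neg_X_comp_neg_X]
    rw [hTp, roots_comp_neg_X, lmesh_comp_neg_X, ← lmesh_comp_neg_X p]
    refine ⟨⟨(hyperbolic_eulerOp hlam hq hqpos).comp_neg_X, Or.inr ?_⟩,
      lmesh_le_lmesh_eulerOp hlam hq hqpos⟩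
    simpa only [Multiset.forall_mem_map_iff, neg_lt_zero] using
      pos_of_mem_roots_eulerOp hlam hq hqpos

/-- For any `λ > 0` and any polynomial `p` of degree `k ≥ 2` with all roots real and of
the same sign, the polynomial `T(p) = λ p + x p'` has all roots real and of the same
sign, and `lmesh(λ p + x p') ≥ lmesh(p)`. -/
theorem stmt_5 (k : ℕ) (hk : 2 ≤ k) (p : Polynomial ℝ) (hdeg : p.natDegree = k)
    (hhyp : Hyperbolic p)
    (hsign : (∀ x ∈ p.roots, 0 < x) ∨ (∀ x ∈ p.roots, x < 0))
    (lam : ℝ) (hlam : 0 < lam) :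
    (Hyperbolic (Polynomial.C lam * p + Polynomial.X * Polynomial.derivative p) ∧
      ((∀ x ∈ (Polynomial.C lam * p + Polynomial.X * Polynomial.derivative p).roots, 0 < x) ∨
       (∀ x ∈ (Polynomial.C lam * p + Polynomial.X * Polynomial.derivative p).roots, x < 0))) ∧
    lmesh p ≤ lmesh (Polynomial.C lam * p + Polynomial.X * Polynomial.derivative p) :=
  stmt_5_general p hhyp hsign lam hlam

end
end

section
/- For every real polynomial Q of degree k ≥ 1 and every real number a, one has Q + a·x·Q' = ((x+1)^{k-1}·((1+ak)x + 1)) * Q, where * denotes the Schur–Szegő product of degree-k polynomials. -/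
open Polynomial
open scoped ENNReal

noncomputable section

/-! The Schur–Szegő product with `Q` acts diagonally on the coefficients of its left factor, so
it is linear in that factor, commutes with the Euler operator `x d/dx`, and has `(x+1)^k` as a
unit on polynomials of degree `≤ k`. Since `(x+1)^(k-1)((1+ak)x+1) = (x+1)^k + a x ((x+1)^k)'`,
its product with `Q` is therefore `Q + a x Q'`. -/

theorem coeff_X_mul_derivative {R : Type*} [Semiring R] (p : R[X]) (n : ℕ) :
    (X * derivative p).coeff n = n * p.coeff n := by
  cases n with
  | zero => simp
  | succ n => rw [coeff_X_mul, coeff_derivative, ← Nat.cast_succ, Nat.cast_comm]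

theorem coeff_schurSzego (k : ℕ) (P Q : ℝ[X]) (n : ℕ) :
    (schurSzego k P Q).coeff n =
      if n ≤ k then (k.choose n : ℝ)⁻¹ * P.coeff n * Q.coeff n else 0 := by
  simp only [schurSzego, finsetSum_coeff, coeff_C_mul_X_pow, Finset.sum_ite_eq,
    Finset.mem_range, Nat.lt_succ_iff]

section SchurSzegoLeft

variable (k : ℕ) (P P' Q : ℝ[X])

theorem schurSzego_add_left : schurSzego k (P + P') Q = schurSzego k P Q + schurSzego k P' Q := by
  ext n
  simp only [coeff_add, coeff_schurSzego]
  split_ifs <;> ring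

theorem schurSzego_C_mul_left (a : ℝ) : schurSzego k (C a * P) Q = C a * schurSzego k P Q := by
  ext n
  simp only [coeff_C_mul, coeff_schurSzego]
  split_ifs <;> ring

theorem schurSzego_X_mul_derivative_left :
    schurSzego k (X * derivative P) Q = X * derivative (schurSzego k P Q) := by
  ext n
  simp only [coeff_X_mul_derivative, coeff_schurSzego]
  split_ifs <;> ring

end SchurSzegoLeft

theorem schurSzego_X_add_one_pow (k : ℕ) (Q : ℝ[X]) (hQ : Q.natDegree ≤ k) :
    schurSzego k ((X + 1) ^ k) Q = Q := by
  ext n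
  rw [coeff_schurSzego, coeff_X_add_one_pow]
  split_ifs with hn
  · have : (k.choose n : ℝ) ≠ 0 := by exact_mod_cast (Nat.choose_pos hn).ne'
    field_simp
  · exact (Q.coeff_eq_zero_of_natDegree_lt (by omega)).symm

theorem X_add_one_pow_pred_mul {R : Type*} [CommSemiring R] (k : ℕ) (hk : 1 ≤ k) (a : R) :
    (X + 1) ^ (k - 1) * (C (1 + a * k) * X + 1) =
      (X + 1) ^ k + C a * (X * derivative ((X + 1 : R[X]) ^ k)) := by
  obtain ⟨l, rfl⟩ := Nat.exists_eq_add_of_le' hk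
  simp only [derivative_pow, derivative_X, derivative_one, Nat.add_sub_cancel,
    map_add, map_one, map_mul, map_natCast]
  ring

/-- For every real polynomial `Q` of degree `k ≥ 1` and every real `a`, one has
`Q + a x Q' = ((x+1)^{k-1} ((1+ak) x + 1)) * Q`, where `*` denotes the Schur–Szegő
product of degree-`k` polynomials. -/
theorem stmt_11 (k : ℕ) (hk : 1 ≤ k) (Q : Polynomial ℝ) (hQ : Q.natDegree = k) (a : ℝ) :
    Q + Polynomial.C a * (Polynomial.X * Polynomial.derivative Q) =
      schurSzego k
        ((Polynomial.X + 1) ^ (k - 1) * (Polynomial.C (1 + a * k) * Polynomial.X + 1)) Q := by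
  rw [X_add_one_pow_pred_mul k hk a, schurSzego_add_left, schurSzego_C_mul_left,
    schurSzego_X_mul_derivative_left, schurSzego_X_add_one_pow k Q hQ.le]

end
end
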